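/- If F is a power series with nonnegative real coefficients and radius of convergence t_F ∈ (0, ∞), and w > 0, and G(t) := (1/(1 − w t)) F(t/(1 − w t)) has a singularity t₀ with |t₀| = t_Q := t_F/(1 + w t_F), then t₀ = t_Q. (That is, after the substitution t ↦ t/(1 − wt), the unique singularity of G on its circle of convergence is the positive real point.) -/

import Mathlib

/-!
Write `t_Q = t_F / (1 + w t_F)`. If `|t₀| = t_Q` but `t₀` is not the positive real `t_Q`, then
`Re t₀ < |t₀|`, so `|1 - w t₀| ≥ Re (1 - w t₀) > 1 - w t_Q = 1 / (1 + w t_F)`. Hence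
`|t₀ / (1 - w t₀)| < t_F`: the substituted point lies strictly inside the disc of convergence of `F`,
and `G` is analytic at `t₀`.
-/

open FormalMultilinearSeries
open scoped ComplexOrder

theorem FormalMultilinearSeries.analyticAt_sum_of_lt_radius {𝕜 E F : Type*}
    [NontriviallyNormedField 𝕜] [NormedAddCommGroup E] [NormedSpace 𝕜 E]
    [NormedAddCommGroup F] [NormedSpace 𝕜 F] [CompleteSpace F]
    (p : FormalMultilinearSeries 𝕜 E F) {z : E} (hz : ‖z‖ₑ < p.radius) :
    AnalyticAt 𝕜 p.sum z :=
  (p.hasFPowerSeriesOnBall (pos_of_gt hz)).analyticAt_of_mem (by simpa using hz)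

theorem FormalMultilinearSeries.ofReal_le_radius_ofScalars {𝕜 : Type*} [RCLike 𝕜]
    (c : ℕ → ℝ) (R : ℝ) (hc : ∀ x : ℝ, 0 ≤ x → x < R → Summable fun n => c n * x ^ n) :
    ENNReal.ofReal R ≤ (ofScalars 𝕜 fun n => (c n : 𝕜)).radius := by
  refine ENNReal.le_of_forall_nnreal_lt fun r hr => ?_
  have hrR : (r : ℝ) < R := ENNReal.coe_lt_ofReal.1 hr
  refine le_radius_of_tendsto _ (l := 0) ?_
  have hterm := (hc r r.coe_nonneg hrR).tendsto_atTop_zero.norm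
  simpa [ofScalars_norm, norm_mul, abs_pow] using hterm

theorem AnalyticAt.inv_one_sub_mul_mul_comp_div {𝕜 : Type*} [NontriviallyNormedField 𝕜]
    {f : 𝕜 → 𝕜} {w t : 𝕜} (hwt : 1 - w * t ≠ 0) (hf : AnalyticAt 𝕜 f (t / (1 - w * t))) :
    AnalyticAt 𝕜 (fun z => (1 - w * z)⁻¹ * f (z / (1 - w * z))) t := by
  have hden : AnalyticAt 𝕜 (fun z => 1 - w * z) t :=
    analyticAt_const.sub (analyticAt_const.mul analyticAt_id)
  exact (hden.inv hwt).mul (hf.comp_of_eq (analyticAt_id.div hden hwt) rfl)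

theorem Complex.one_sub_mul_norm_lt_norm_one_sub_mul {w : ℝ} (hw : 0 < w) {t : ℂ}
    (ht : ¬ 0 ≤ t) : 1 - w * ‖t‖ < ‖1 - w * t‖ := by
  have hre : t.re < ‖t‖ := (re_le_norm t).lt_of_ne (mt re_eq_norm.1 ht)
  calc 1 - w * ‖t‖ < 1 - w * t.re := by gcongr
    _ = (1 - w * t).re := by simp
    _ ≤ ‖1 - w * t‖ := re_le_norm _

theorem Complex.norm_div_one_sub_mul_lt {R w : ℝ} (hR : 0 < R) (hw : 0 < w) {t : ℂ}
    (ht : ‖t‖ = R / (1 + w * R)) (hnn : ¬ 0 ≤ t) :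
    1 - w * t ≠ 0 ∧ ‖t / (1 - w * t)‖ < R := by
  have hkey := one_sub_mul_norm_lt_norm_one_sub_mul hw hnn
  have hgap : 1 - w * ‖t‖ = (1 + w * R)⁻¹ := by
    rw [ht]
    field_simp
    ring
  have hpos : 0 < ‖1 - w * t‖ := lt_trans (by rw [hgap]; positivity) hkey
  refine ⟨norm_pos_iff.1 hpos, ?_⟩
  rw [norm_div, div_lt_iff₀ hpos]
  calc ‖t‖ = R * (1 - w * ‖t‖) := by
        rw [hgap, ht]
        ring
    _ < R * ‖1 - w * t‖ := mul_lt_mul_of_pos_left hkey hR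

theorem substitution_dominant_singularity_real_general (F : ℕ → ℝ)
    (tF : ℝ) (htF : 0 < tF)
    (hconv : ∀ x : ℝ, 0 ≤ x → x < tF → Summable fun n => F n * x ^ n)
    (w : ℝ) (hw : 0 < w) (t₀ : ℂ)
    (ht₀ : ‖t₀‖ = tF / (1 + w * tF))
    (hsing : ¬ ∃ g : ℂ → ℂ, AnalyticAt ℂ g t₀ ∧
      ∀ z : ℂ, 1 - (w : ℂ) * z ≠ 0 → ‖z / (1 - (w : ℂ) * z)‖ < tF →
        g z = (1 - (w : ℂ) * z)⁻¹ * ∑' n : ℕ, (F n : ℂ) * (z / (1 - (w : ℂ) * z)) ^ n) :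
    t₀ = ((tF / (1 + w * tF) : ℝ) : ℂ) := by
  by_contra hne
  have hnn : ¬ 0 ≤ t₀ := fun h => hne (by rw [Complex.eq_coe_norm_of_nonneg h, ht₀])
  obtain ⟨hwt₀, hinside⟩ := Complex.norm_div_one_sub_mul_lt htF hw ht₀ hnn
  have hF : AnalyticAt ℂ (ofScalarsSum fun n => (F n : ℂ)) (t₀ / (1 - w * t₀)) := by
    refine analyticAt_sum_of_lt_radius _ (lt_of_lt_of_le ?_ (ofReal_le_radius_ofScalars F tF hconv))
    rwa [← ofReal_norm, ENNReal.ofReal_lt_ofReal_iff htF]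
  exact hsing ⟨_, hF.inv_one_sub_mul_mul_comp_div hwt₀, fun z _ _ => by
    simp only [ofScalars_sum_eq, smul_eq_mul]⟩

/-- After the substitution `t ↦ t/(1−wt)`, the only possible singularity of
`G(t) = (1/(1−wt)) F(t/(1−wt))` on its circle of convergence `|t| = t_F/(1+w t_F)`
is the positive real point `t_Q = t_F/(1+w t_F)`. -/
theorem substitution_dominant_singularity_real (F : ℕ → ℝ) (hF : ∀ n, 0 ≤ F n)
    (tF : ℝ) (htF : 0 < tF)
    (hconv : ∀ x : ℝ, 0 ≤ x → x < tF → Summable fun n => F n * x ^ n)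
    (hdiv : ∀ x : ℝ, tF < x → ¬ Summable fun n => F n * x ^ n)
    (w : ℝ) (hw : 0 < w) (t₀ : ℂ)
    (ht₀ : ‖t₀‖ = tF / (1 + w * tF))
    (hsing : ¬ ∃ g : ℂ → ℂ, AnalyticAt ℂ g t₀ ∧
      ∀ z : ℂ, 1 - (w : ℂ) * z ≠ 0 → ‖z / (1 - (w : ℂ) * z)‖ < tF →
        g z = (1 - (w : ℂ) * z)⁻¹ * ∑' n : ℕ, (F n : ℂ) * (z / (1 - (w : ℂ) * z)) ^ n) :
    t₀ = ((tF / (1 + w * tF) : ℝ) : ℂ) :=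
  substitution_dominant_singularity_real_general F tF htF hconv w hw t₀ ht₀ hsing
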